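/- Let u, w be words over Σ with ι(w) = k ≥ 1 and ι(u) = ℓ ≥ 1. Then ι(wu) = k + ℓ + 1 if and only if alph(r(w)·r(u^R)) = Σ, where r denotes the remainder of the arch factorization. -/

import Mathlib

open List

variable {α : Type*}

/-- `w` is `k`-universal: every word of length `k` over the alphabet `α`
is a scattered factor (subsequence) of `w`. -/
def IsUniversal [Fintype α] (k : ℕ) (w : List α) : Prop :=
  ∀ u : List α, u.length = k → u.Sublist w

/-- The universality index `ι(w)`: the largest `k` such that `w` is `k`-universal. -/
noncomputable def univIndex [Fintype α] (w : List α) : ℕ :=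
  sSup {k | IsUniversal k w}

/-- The circular universality index `ζ(w)`: the largest `k` such that some
conjugate of `w` is `k`-universal. -/
noncomputable def circIndex [Fintype α] (w : List α) : ℕ :=
  sSup {k | ∃ u v : List α, w = u ++ v ∧ IsUniversal k (v ++ u)}

/-- `wpow w s = w^s`, the `s`-fold concatenation of `w`. -/
def wpow (w : List α) (s : ℕ) : List α := (List.replicate s w).flatten

/-- Auxiliary (fuelled) computation of the remainder of the arch factorisation:
greedily remove the shortest prefix containing every letter of the alphabet. -/
def remAux [Fintype α] [DecidableEq α] : ℕ → List α → List α
  | 0, w => w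
  | (n+1), w =>
    match (List.range' 1 w.length).find?
        (fun m => decide ((w.take m).toFinset = Finset.univ)) with
    | none => w
    | some m => remAux n (w.drop m)

/-- `rem w = r(w)`, the remainder of the arch factorisation of `w`. -/
def rem [Fintype α] [DecidableEq α] (w : List α) : List α := remAux w.length w

/-- Auxiliary (fuelled) computation of the list of arches of `w`. -/
def archesAux [Fintype α] [DecidableEq α] : ℕ → List α → List (List α)
  | 0, _ => []
  | (n+1), w =>
    match (List.range' 1 w.length).find?
        (fun m => decide ((w.take m).toFinset = Finset.univ)) with
    | none => []
    | some m => (w.take m) :: archesAux n (w.drop m)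

/-- `arches w`: the list `[arch₁(w), …, arch_{ι(w)}(w)]` of arches of `w`. -/
def arches [Fintype α] [DecidableEq α] (w : List α) : List (List α) :=
  archesAux w.length w


/-!
Write `w = arch₁ ⋯ arch_k · r(w)` and `u^R = arch'₁ ⋯ arch'_ℓ · r(u^R)`, so that
`w u = arch₁ ⋯ arch_k · (r(w) · r(u^R)^R) · arch'_ℓ^R ⋯ arch'₁^R`. Every arch contains all
letters, so if the middle factor does too, `wu` is a concatenation of `k + ℓ + 1` full blocks.
On the other hand `ι(wu) ≤ k + ℓ + 1` always: if `v₁ v₂` embeds into `wu` then `v₁` embeds into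
`w` or `v₂` into `u`. Finally, if a letter `c` is missing from the middle factor, let `m(x)` be
the word of last letters of the arches of `x`; in `m(w) · c · m(u^R)^R`, greedily matching
`m(w)` from the left consumes the arches of `w`, and `m(u^R)^R` from the right consumes those
of `u`, so `c` would have to occur in `r(w) · r(u^R)^R`.
-/

section Universality

variable [Fintype α]

theorem univIndex_eq_zero_of_isEmpty [IsEmpty α] (w : List α) : univIndex w = 0 := by
  have hall : ∀ k, IsUniversal k w := fun _ v _ => by
    cases v with
    | nil => exact List.nil_sublist w
    | cons a _ => exact isEmptyElim a
  have hunbdd : ¬ BddAbove {k | IsUniversal k w} := fun ⟨b, hb⟩ =>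
    (hb (hall (b + 1))).not_gt (Nat.lt_succ_self b)
  rw [univIndex, csSup_of_not_bddAbove hunbdd, csSup_empty]
  rfl

theorem nonempty_of_univIndex_pos {w : List α} (h : 0 < univIndex w) : Nonempty α := by
  by_contra hα
  rw [not_nonempty_iff] at hα
  exact h.ne' (univIndex_eq_zero_of_isEmpty w)

theorem IsUniversal.of_le [Nonempty α] {w : List α} {k m : ℕ} (h : IsUniversal m w)
    (hk : k ≤ m) : IsUniversal k w := by
  intro v hv
  obtain ⟨a⟩ := ‹Nonempty α›
  exact (v.sublist_append_left _).trans (h (v ++ List.replicate (m - k) a) (by simp; omega))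

theorem IsUniversal.le_length [Nonempty α] {w : List α} {m : ℕ} (h : IsUniversal m w) :
    m ≤ w.length := by
  obtain ⟨a⟩ := ‹Nonempty α›
  simpa using (h (List.replicate m a) (by simp)).length_le

theorem univIndex_eq_iff [Nonempty α] {w : List α} {m : ℕ} :
    univIndex w = m ↔ IsUniversal m w ∧ ¬ IsUniversal (m + 1) w := by
  have hbdd : BddAbove {k | IsUniversal k w} := ⟨w.length, fun _ hk => IsUniversal.le_length hk⟩
  have hne : Set.Nonempty {k | IsUniversal k w} :=
    ⟨0, fun v hv => by simp [List.length_eq_zero_iff.mp hv]⟩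
  constructor
  · rintro rfl
    exact ⟨Nat.sSup_mem hne hbdd, fun h => (le_csSup hbdd h).not_gt (Nat.lt_succ_self _)⟩
  · rintro ⟨hm, hm1⟩
    refine le_antisymm (csSup_le hne fun k hk => ?_) (le_csSup hbdd hm)
    by_contra hlt
    exact hm1 (IsUniversal.of_le hk (by omega))

theorem IsUniversal.mono {w w' : List α} {k : ℕ} (h : IsUniversal k w) (hw : w <+ w') :
    IsUniversal k w' :=
  fun v hv => (h v hv).trans hw

theorem IsUniversal.append {w u : List α} {m n : ℕ} (hw : IsUniversal m w)
    (hu : IsUniversal n u) : IsUniversal (m + n) (w ++ u) := by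
  intro v hv
  rw [← v.take_append_drop m]
  exact (hw _ (by simp; omega)).append (hu _ (by simp; omega))

theorem isUniversal_one_of_toFinset_eq_univ [DecidableEq α] {x : List α}
    (hx : x.toFinset = Finset.univ) : IsUniversal 1 x := by
  intro v hv
  obtain ⟨a, rfl⟩ := List.length_eq_one_iff.mp hv
  simp [← List.mem_toFinset, hx]

theorem isUniversal_flatten [DecidableEq α] {L : List (List α)}
    (hL : ∀ x ∈ L, x.toFinset = Finset.univ) : IsUniversal L.length L.flatten := by
  induction L with
  | nil => exact fun v hv => by simp [List.length_eq_zero_iff.mp hv]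
  | cons x L ih =>
    rw [List.length_cons, add_comm, List.flatten_cons]
    exact IsUniversal.append (isUniversal_one_of_toFinset_eq_univ (hL x List.mem_cons_self))
      (ih fun y hy => hL y (List.mem_cons_of_mem _ hy))

theorem isUniversal_reverse {w : List α} {k : ℕ} :
    IsUniversal k w.reverse ↔ IsUniversal k w where
  mp h v hv := List.reverse_sublist.mp (by simpa using h v.reverse (by simpa using hv))
  mpr h v hv := by simpa using List.reverse_sublist.mpr (h v.reverse (by simpa using hv))

theorem univIndex_reverse (w : List α) : univIndex w.reverse = univIndex w := by
  simp only [univIndex, isUniversal_reverse]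

theorem not_isUniversal_append {w u : List α} {m n : ℕ} (hw : ¬ IsUniversal (m + 1) w)
    (hu : ¬ IsUniversal (n + 1) u) : ¬ IsUniversal (m + n + 2) (w ++ u) := by
  simp only [IsUniversal, not_forall] at hw hu
  obtain ⟨v₁, hv₁, hv₁w⟩ := hw
  obtain ⟨v₂, hv₂, hv₂u⟩ := hu
  intro h
  obtain ⟨l₁, l₂, heq, hl₁, hl₂⟩ := List.sublist_append_iff.mp (h (v₁ ++ v₂) (by simp; omega))
  rcases List.append_eq_append_iff.mp heq with ⟨a, rfl, -⟩ | ⟨c, -, rfl⟩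
  · exact hv₁w ((List.sublist_append_left v₁ a).trans hl₁)
  · exact hv₂u ((List.sublist_append_right c v₂).trans hl₂)

end Universality

section Arches

variable [Fintype α] [DecidableEq α]

/-- A full word whose last letter occurs only once; this is the shape of a shortest full
prefix, i.e. of an arch. -/
def IsArch (x : List α) : Prop :=
  x.toFinset = Finset.univ ∧ ∃ y a, x = y ++ [a] ∧ a ∉ y

theorem toFinset_nil_ne_univ [Nonempty α] : ([] : List α).toFinset ≠ Finset.univ := by
  simpa using Finset.univ_nonempty.ne_empty.symm

theorem isArch_take_of_find?_eq_some {w : List α} {m : ℕ}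
    (h : (List.range' 1 w.length).find?
      (fun m => decide ((w.take m).toFinset = Finset.univ)) = some m) :
    IsArch (w.take m) := by
  obtain ⟨hfull, hmem, hmin⟩ := List.find?_range'_eq_some.mp h
  rw [List.mem_range'_1] at hmem
  obtain ⟨j, rfl⟩ : ∃ j, m = j + 1 := ⟨m - 1, by omega⟩
  have hsplit : w.take (j + 1) = w.take j ++ [w[j]] := by
    rw [List.take_add_one, List.getElem?_eq_getElem (by omega)]
    rfl
  rw [decide_eq_true_iff] at hfull
  refine ⟨hfull, _, _, hsplit, fun hj => ?_⟩
  have hprev : (w.take j).toFinset = Finset.univ := by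
    rwa [hsplit, List.toFinset_append, Finset.union_eq_left.mpr (by simpa using hj)] at hfull
  have hj1 : 1 ≤ j := Nat.one_le_iff_ne_zero.mpr (by rintro rfl; simp at hj)
  simpa [hprev] using hmin j hj1 (by omega)

theorem toFinset_ne_univ_of_find?_eq_none [Nonempty α] {w : List α}
    (h : (List.range' 1 w.length).find?
      (fun m => decide ((w.take m).toFinset = Finset.univ)) = none) :
    w.toFinset ≠ Finset.univ := by
  intro hw
  have hlen : w ≠ [] := by rintro rfl; exact toFinset_nil_ne_univ hw
  refine List.find?_eq_none.mp h w.length ?_ (by simpa using hw)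
  rw [List.mem_range'_1]
  have := List.length_pos_iff.mpr hlen
  omega

theorem flatten_archesAux_append_remAux (n : ℕ) (w : List α) :
    (archesAux n w).flatten ++ remAux n w = w := by
  induction n generalizing w with
  | zero => rfl
  | succ n ih =>
    cases h : (List.range' 1 w.length).find?
        (fun m => decide ((w.take m).toFinset = Finset.univ)) with
    | none => simp [archesAux, remAux, h]
    | some m => simp [archesAux, remAux, h, ih]

theorem isArch_of_mem_archesAux {n : ℕ} {w x : List α} (hx : x ∈ archesAux n w) : IsArch x := by
  induction n generalizing w with
  | zero => simp [archesAux] at hx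
  | succ n ih =>
    cases h : (List.range' 1 w.length).find?
        (fun m => decide ((w.take m).toFinset = Finset.univ)) with
    | none => simp [archesAux, h] at hx
    | some m =>
      simp only [archesAux, h, List.mem_cons] at hx
      rcases hx with rfl | hx
      · exact isArch_take_of_find?_eq_some h
      · exact ih hx

theorem toFinset_remAux_ne_univ [Nonempty α] {n : ℕ} {w : List α} (hn : w.length ≤ n) :
    (remAux n w).toFinset ≠ Finset.univ := by
  induction n generalizing w with
  | zero => simpa [remAux, List.length_eq_zero_iff.mp (Nat.le_zero.mp hn)] using
      toFinset_nil_ne_univ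
  | succ n ih =>
    cases h : (List.range' 1 w.length).find?
        (fun m => decide ((w.take m).toFinset = Finset.univ)) with
    | none => simpa [remAux, h] using toFinset_ne_univ_of_find?_eq_none h
    | some m =>
      simp only [remAux, h]
      obtain ⟨-, y, a, hya, -⟩ := isArch_take_of_find?_eq_some h
      have hlen := congrArg List.length (w.take_append_drop m)
      rw [List.length_append, hya, List.length_append, List.length_singleton] at hlen
      exact ih (by omega)

theorem flatten_arches_append_rem (w : List α) : (arches w).flatten ++ rem w = w :=
  flatten_archesAux_append_remAux _ w

theorem isArch_of_mem_arches {w x : List α} (hx : x ∈ arches w) : IsArch x :=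
  isArch_of_mem_archesAux hx

theorem toFinset_rem_ne_univ [Nonempty α] (w : List α) : (rem w).toFinset ≠ Finset.univ :=
  toFinset_remAux_ne_univ le_rfl

end Arches

theorem cons_sublist_of_not_mem {a : α} {y z r : List α} (ha : a ∉ y)
    (h : a :: z <+ y ++ r) : a :: z <+ r := by
  obtain ⟨l₁, l₂, heq, h₁, h₂⟩ := List.sublist_append_iff.mp h
  cases l₁ with
  | nil => simpa [heq] using h₂
  | cons b l =>
    obtain ⟨rfl, -⟩ := List.cons_eq_cons.mp heq
    exact absurd (h₁.subset List.mem_cons_self) ha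

section ArchFactorization

variable [Fintype α] [DecidableEq α]

/-- `v` is the word of last letters of the arches: embedding it greedily consumes all of
`L.flatten`. -/
theorem exists_sublist_cancel_of_forall_isArch {L : List (List α)} (hL : ∀ x ∈ L, IsArch x) :
    ∃ v : List α, v.length = L.length ∧ ∀ {s t : List α}, v ++ s <+ L.flatten ++ t → s <+ t := by
  induction L with
  | nil => exact ⟨[], rfl, fun h => by simpa using h⟩
  | cons x L ih =>
    obtain ⟨-, y, a, rfl, ha⟩ := hL x List.mem_cons_self
    obtain ⟨v, hv, hcancel⟩ := ih fun x hx => hL x (List.mem_cons_of_mem _ hx)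
    refine ⟨a :: v, by simp [hv], fun {s t} h => hcancel ?_⟩
    have h' : a :: (v ++ s) <+ y ++ a :: (L.flatten ++ t) := by simpa using h
    exact List.cons_sublist_cons.mp (cons_sublist_of_not_mem ha h')

theorem exists_sublist_rem_append_of_append_sublist (w : List α) :
    ∃ v : List α, v.length = (arches w).length ∧
      ∀ {s t : List α}, v ++ s <+ w ++ t → s <+ rem w ++ t := by
  obtain ⟨v, hv, hcancel⟩ := exists_sublist_cancel_of_forall_isArch
    fun _ hx => isArch_of_mem_arches (w := w) hx
  refine ⟨v, hv, fun h => hcancel ?_⟩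
  rwa [← List.append_assoc, flatten_arches_append_rem]

theorem isUniversal_flatten_arches (w : List α) :
    IsUniversal (arches w).length (arches w).flatten :=
  isUniversal_flatten fun _ hx => (isArch_of_mem_arches hx).1

theorem univIndex_eq_length_arches [Nonempty α] (w : List α) :
    univIndex w = (arches w).length := by
  refine univIndex_eq_iff.mpr ⟨?_, fun h => ?_⟩
  · refine IsUniversal.mono (isUniversal_flatten_arches w) ?_
    conv_rhs => rw [← flatten_arches_append_rem w]
    exact List.sublist_append_left _ _
  · obtain ⟨c, hc⟩ : ∃ c, c ∉ rem w := by
      simpa [Finset.eq_univ_iff_forall] using toFinset_rem_ne_univ w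
    obtain ⟨v, hv, hcancel⟩ := exists_sublist_rem_append_of_append_sublist w
    have hsub : [c] <+ rem w ++ [] := hcancel (by simpa using h (v ++ [c]) (by simp [hv]))
    exact hc (by simpa using hsub)

theorem toFinset_rem_append_rem_reverse_eq_univ [Nonempty α] {w u : List α}
    (h : IsUniversal (univIndex w + univIndex u + 1) (w ++ u)) :
    (rem w ++ rem u.reverse).toFinset = Finset.univ := by
  by_contra hne
  obtain ⟨c, hc⟩ : ∃ c, c ∉ rem w ++ rem u.reverse := by
    simpa [Finset.eq_univ_iff_forall] using hne
  obtain ⟨A, hA, hAw⟩ := exists_sublist_rem_append_of_append_sublist w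
  obtain ⟨B, hB, hBu⟩ := exists_sublist_rem_append_of_append_sublist u.reverse
  have hlen : (A ++ c :: B.reverse).length = univIndex w + univIndex u + 1 := by
    rw [← univIndex_reverse u, univIndex_eq_length_arches, univIndex_eq_length_arches]
    simp [hA, hB]
    omega
  have h₁ : c :: B.reverse <+ rem w ++ u := hAw (h _ hlen)
  have h₂ : [c] <+ rem u.reverse ++ (rem w).reverse :=
    hBu (by simpa using List.reverse_sublist.mpr h₁)
  exact hc (by simpa [or_comm] using h₂.subset (List.mem_singleton_self c))

theorem isUniversal_append_of_toFinset_rem_append_rem_reverse_eq_univ [Nonempty α]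
    {w u : List α} (h : (rem w ++ rem u.reverse).toFinset = Finset.univ) :
    IsUniversal (univIndex w + univIndex u + 1) (w ++ u) := by
  have hw : IsUniversal (univIndex w) (arches w).flatten := by
    simpa [univIndex_eq_length_arches] using isUniversal_flatten_arches w
  have hu : IsUniversal (univIndex u) (arches u.reverse).flatten.reverse := by
    rw [isUniversal_reverse, ← univIndex_reverse, univIndex_eq_length_arches]
    exact isUniversal_flatten_arches u.reverse
  have hmid : IsUniversal 1 (rem w ++ (rem u.reverse).reverse) :=
    isUniversal_one_of_toFinset_eq_univ (by simpa using h)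
  have hdecomp : w ++ u = (arches w).flatten ++ (rem w ++ (rem u.reverse).reverse) ++
      (arches u.reverse).flatten.reverse := by
    conv_lhs => rw [← flatten_arches_append_rem w, ← u.reverse_reverse,
      ← flatten_arches_append_rem u.reverse]
    simp
  rw [hdecomp, add_right_comm]
  exact IsUniversal.append (IsUniversal.append hw hmid) hu

end ArchFactorization

theorem univIndex_append_succ_iff_general [Fintype α] [DecidableEq α] (w u : List α) (k ℓ : ℕ)
    (hw : univIndex w = k) (hk1 : 1 ≤ k) (hu : univIndex u = ℓ) :
    univIndex (w ++ u) = k + ℓ + 1 ↔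
      (rem w ++ rem u.reverse).toFinset = Finset.univ := by
  subst hw hu
  have : Nonempty α := nonempty_of_univIndex_pos hk1
  rw [univIndex_eq_iff]
  refine ⟨fun h => toFinset_rem_append_rem_reverse_eq_univ h.1, fun h => ⟨?_, ?_⟩⟩
  · exact isUniversal_append_of_toFinset_rem_append_rem_reverse_eq_univ h
  · exact not_isUniversal_append (univIndex_eq_iff.mp rfl).2 (univIndex_eq_iff.mp rfl).2

theorem univIndex_append_succ_iff [Fintype α] [DecidableEq α] (w u : List α) (k ℓ : ℕ)
    (hw : univIndex w = k) (hk1 : 1 ≤ k) (hu : univIndex u = ℓ) (hl1 : 1 ≤ ℓ) :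
    univIndex (w ++ u) = k + ℓ + 1 ↔
      (rem w ++ rem u.reverse).toFinset = Finset.univ :=
  univIndex_append_succ_iff_general w u k ℓ hw hk1 hu
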